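/- arXiv:1406.5468 — 2 statements merged into one kernel-verified Lean document; each statement's English description precedes it below -/
import Mathlib

section
/- Let f : R^d → R be convex and continuously differentiable with L-Lipschitz gradient, and let x_* minimize f. Let x_0, x_1, ... be generated by Nesterov's FGM1: y_{i+1} = x_i - (1/L) f'(x_i), t_{i+1} = (1+sqrt(1+4t_i^2))/2 with t_0 = 1, x_{i+1} = y_{i+1} + ((t_i - 1)/t_{i+1})(y_{i+1} - y_i). Then for every n ≥ 1, f(x_n) - f(x_*) ≤ L ||x_0 - x_*||^2 / (2 t_n^2) ≤ 2 L ||x_0 - x_*||^2 / (n+2)^2. -/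
noncomputable def tseq : ℕ → ℝ
  | 0 => 1
  | i + 1 => (1 + Real.sqrt (1 + 4 * (tseq i) ^ 2)) / 2

/-!
With `z_k = y_k + t_k (y_{k+1} - y_k)` (`fgmZ`), the potential
`t_k² (f x_k - f x_*) + (L/2) ‖z_k - x_*‖²` never increases. To see this, add `t_k²` times the
interpolation inequality `f b + ⟪f' b, a - b⟫ + ‖f' a - f' b‖² / (2L) ≤ f a` of `L`-smooth convex
functions for `(a, b) = (x_k, x_{k+1})` to `t_{k+1}` times the same inequality for
`(a, b) = (x_*, x_{k+1})`, and use `t_{k+1}² = t_k² + t_{k+1}` together with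
`t_{k+1}² x_{k+1} = t_k² y_{k+1} + t_{k+1} z_k`. The bound at `k = 0` is the same computation
with `t_{-1} = 0`. The potential at `n` is at most `(L/2) ‖x_0 - x_*‖²`, and `t_n ≥ (n + 2)/2`
gives the rate.
-/

open Set AffineMap
open scoped RealInnerProductSpace

lemma tseq_succ_sq (n : ℕ) : tseq (n + 1) ^ 2 = tseq n ^ 2 + tseq (n + 1) := by
  have hsqrt := Real.sq_sqrt (by positivity : (0 : ℝ) ≤ 1 + 4 * tseq n ^ 2)
  rw [tseq]
  linear_combination hsqrt / 4

lemma add_two_div_two_le_tseq : ∀ n : ℕ, ((n : ℝ) + 2) / 2 ≤ tseq n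
  | 0 => by norm_num [tseq]
  | n + 1 => by
    have ih := add_two_div_two_le_tseq n
    have hsqrt : 2 * tseq n ≤ √(1 + 4 * tseq n ^ 2) := Real.le_sqrt_of_sq_le (by linarith)
    rw [tseq]
    push_cast
    linarith

lemma tseq_pos (n : ℕ) : 0 < tseq n :=
  lt_of_lt_of_le (by positivity) (add_two_div_two_le_tseq n)

lemma div_two_mul_tseq_sq_le {c : ℝ} (hc : 0 ≤ c) (n : ℕ) :
    c / (2 * tseq n ^ 2) ≤ 2 * c / ((n : ℝ) + 2) ^ 2 := by
  have h := add_two_div_two_le_tseq n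
  have h2 : ((n : ℝ) + 2) ^ 2 ≤ (2 * tseq n) ^ 2 :=
    pow_le_pow_left₀ (by positivity) (by linarith) 2
  rw [div_le_div_iff₀ (by positivity [tseq_pos n]) (by positivity)]
  nlinarith

section SmoothConvex

variable {F : Type*} [NormedAddCommGroup F] [InnerProductSpace ℝ F] [CompleteSpace F]
  {f : F → ℝ} {f' : F → F} {a b : F} {g : F} {L : ℝ}

lemma HasGradientAt.hasDerivAt_comp_lineMap {s : ℝ} (h : HasGradientAt f g (lineMap a b s)) :
    HasDerivAt (f ∘ lineMap a b) ⟪g, b - a⟫ s := by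
  simpa using (hasGradientAt_iff_hasFDerivAt.mp h).comp_hasDerivAt s
    (hasDerivAt_lineMap : HasDerivAt (lineMap a b : ℝ → F) (b - a) s)

lemma IsLocalMin.hasGradientAt_eq_zero (h : IsLocalMin f a) (hf : HasGradientAt f g a) :
    g = 0 := by
  simpa using h.hasFDerivAt_eq_zero (hasGradientAt_iff_hasFDerivAt.mp hf)

lemma ConvexOn.add_inner_le_of_hasGradientAt (hf : ConvexOn ℝ univ f) (ha : HasGradientAt f g a)
    (b : F) : f a + ⟪g, b - a⟫ ≤ f b := by
  have hφ : ConvexOn ℝ univ (f ∘ lineMap (k := ℝ) a b) := by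
    simpa using hf.comp_affineMap (lineMap a b)
  have := hφ.le_slope_of_hasDerivAt (mem_univ 0) (mem_univ 1) one_pos
    (HasGradientAt.hasDerivAt_comp_lineMap (by simpa using ha))
  simp only [slope_def_field, Function.comp_apply, lineMap_apply_one, lineMap_apply_zero, sub_zero,
    div_one] at this
  linarith

lemma le_add_inner_add_of_lipschitz_gradient (hgrad : ∀ x, HasGradientAt f (f' x) x)
    (hlip : ∀ x y, ‖f' x - f' y‖ ≤ L * ‖x - y‖) (a b : F) :
    f b ≤ f a + ⟪f' a, b - a⟫ + L / 2 * ‖b - a‖ ^ 2 := by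
  set χ : ℝ → ℝ := fun s ↦ f (lineMap a b s) - s * ⟪f' a, b - a⟫ - s ^ 2 * (L / 2 * ‖b - a‖ ^ 2)
  have hχ : ∀ s, HasDerivAt χ
      (⟪f' (lineMap a b s) - f' a, b - a⟫ - s * (L * ‖b - a‖ ^ 2)) s := by
    intro s
    have h := (((hgrad (lineMap a b s)).hasDerivAt_comp_lineMap).sub
      ((hasDerivAt_id s).mul_const ⟪f' a, b - a⟫)).sub
      ((hasDerivAt_pow 2 s).mul_const (L / 2 * ‖b - a‖ ^ 2))
    exact h.congr_deriv (by rw [inner_sub_left]; ring)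
  have hanti : AntitoneOn χ (Ici 0) := by
    refine antitoneOn_of_hasDerivWithinAt_nonpos (convex_Ici 0)
      (fun s _ ↦ (hχ s).continuousAt.continuousWithinAt) (fun s _ ↦ (hχ s).hasDerivWithinAt)
      fun s hs ↦ ?_
    rw [interior_Ici, mem_Ioi] at hs
    have hlip_s : ‖f' (lineMap a b s) - f' a‖ ≤ L * (s * ‖b - a‖) := by
      simpa [lineMap_apply, norm_smul, abs_of_pos hs] using hlip (lineMap a b s) a
    calc ⟪f' (lineMap a b s) - f' a, b - a⟫ - s * (L * ‖b - a‖ ^ 2)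
        ≤ ‖f' (lineMap a b s) - f' a‖ * ‖b - a‖ - s * (L * ‖b - a‖ ^ 2) := by
          gcongr; exact real_inner_le_norm _ _
      _ ≤ L * (s * ‖b - a‖) * ‖b - a‖ - s * (L * ‖b - a‖ ^ 2) := by gcongr
      _ = 0 := by ring
  have h01 : χ 1 ≤ χ 0 := hanti self_mem_Ici (zero_le_one' ℝ) zero_le_one
  simp only [χ, lineMap_apply_zero, lineMap_apply_one] at h01
  linarith

lemma ConvexOn.add_inner_add_norm_sub_sq_div_le (hf : ConvexOn ℝ univ f)
    (hgrad : ∀ x, HasGradientAt f (f' x) x) (hlip : ∀ x y, ‖f' x - f' y‖ ≤ L * ‖x - y‖)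
    (hL : 0 < L) (a b : F) :
    f b + ⟪f' b, a - b⟫ + ‖f' a - f' b‖ ^ 2 / (2 * L) ≤ f a := by
  set w := f' a - f' b
  -- `p` is the gradient step from `a` for `f - ⟪f' b, ·⟫`, a function minimised at `b`.
  set p := a - L⁻¹ • w
  have h₁ := hf.add_inner_le_of_hasGradientAt (hgrad b) p
  rw [show p - b = (a - b) - L⁻¹ • w from sub_right_comm _ _ _, inner_sub_right,
    inner_smul_right] at h₁
  have h₂ : f p ≤ f a - L⁻¹ * ⟪f' a, w⟫ + L / 2 * (L⁻¹ ^ 2 * ‖w‖ ^ 2) := by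
    simpa [p, inner_smul_right, norm_smul, abs_of_pos hL, mul_pow, sub_eq_add_neg]
      using le_add_inner_add_of_lipschitz_gradient hgrad hlip a p
  have hw : ⟪f' a, w⟫ - ⟪f' b, w⟫ = ‖w‖ ^ 2 := by
    rw [← inner_sub_left, real_inner_self_eq_norm_sq]
  have hL' : L / 2 * (L⁻¹ ^ 2 * ‖w‖ ^ 2) = L⁻¹ * ‖w‖ ^ 2 - ‖w‖ ^ 2 / (2 * L) := by
    field_simp; ring
  linear_combination h₁ + h₂ - L⁻¹ * hw + hL'

end SmoothConvex

section FGM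

variable {E : Type*} [AddCommGroup E] [Module ℝ E] {L : ℝ} {f' : E → E} {x y : ℕ → E}

noncomputable def fgmZ (y : ℕ → E) (k : ℕ) : E := y k + tseq k • (y (k + 1) - y k)

lemma fgmZ_zero (y : ℕ → E) : fgmZ y 0 = y 1 := by
  simp [fgmZ, tseq]

lemma fgmZ_succ (hyrec : ∀ i : ℕ, y (i + 1) = x i - (1 / L) • f' (x i))
    (hxrec : ∀ i : ℕ, x (i + 1) =
      y (i + 1) + ((tseq i - 1) / tseq (i + 1)) • (y (i + 1) - y i)) (k : ℕ) :
    fgmZ y (k + 1) = fgmZ y k - (tseq (k + 1) / L) • f' (x (k + 1)) := by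
  have ht := (tseq_pos (k + 1)).ne'
  simp only [fgmZ]
  rw [hyrec (k + 1), hxrec k]
  match_scalars <;> field_simp <;> ring

lemma sq_tseq_succ_smul (hxrec : ∀ i : ℕ, x (i + 1) =
      y (i + 1) + ((tseq i - 1) / tseq (i + 1)) • (y (i + 1) - y i)) (k : ℕ) :
    tseq (k + 1) ^ 2 • x (k + 1) = tseq k ^ 2 • y (k + 1) + tseq (k + 1) • fgmZ y k := by
  have ht := (tseq_pos (k + 1)).ne'
  have hsq := tseq_succ_sq k
  simp only [fgmZ]
  rw [hxrec k]
  match_scalars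
  · field_simp
    linear_combination hsq
  · field_simp
    ring

end FGM

section Potential

variable {F : Type*} [NormedAddCommGroup F] [InnerProductSpace ℝ F] {f : F → ℝ} {f' : F → F}
  {L : ℝ}

lemma fgm_potential_step (hL : 0 < L)
    (hcoco : ∀ a b, f b + ⟪f' b, a - b⟫ + ‖f' a - f' b‖ ^ 2 / (2 * L) ≤ f a)
    {xstar : F} (hstar : f' xstar = 0) {t u : ℝ} (hu : 0 ≤ u) (htu : u ^ 2 = t ^ 2 + u)
    {a a' z : F} (ha' : u ^ 2 • a' = t ^ 2 • (a - (1 / L) • f' a) + u • z) :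
    u ^ 2 * (f a' - f xstar) + L / 2 * ‖z - (u / L) • f' a' - xstar‖ ^ 2 ≤
      t ^ 2 * (f a - f xstar) + L / 2 * ‖z - xstar‖ ^ 2 := by
  have h₁ := hcoco a a'
  have h₂ := hcoco xstar a'
  rw [hstar, zero_sub, norm_neg] at h₂
  have hv : t ^ 2 • (a - a') + u • (xstar - a') = (t ^ 2 / L) • f' a - u • (z - xstar) := by
    have : t ^ 2 • a' + u • a' = t ^ 2 • (a - (1 / L) • f' a) + u • z := by
      rw [← add_smul, ← htu, ha']
    linear_combination (norm := module) -this
  have hi : t ^ 2 * ⟪f' a', a - a'⟫ + u * ⟪f' a', xstar - a'⟫ =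
      t ^ 2 / L * ⟪f' a', f' a⟫ - u * ⟪f' a', z - xstar⟫ := by
    simpa only [inner_add_right, inner_sub_right, inner_smul_right] using
      congrArg (⟪f' a', ·⟫) hv
  have hn : L / 2 * ‖z - (u / L) • f' a' - xstar‖ ^ 2 =
      L / 2 * ‖z - xstar‖ ^ 2 - u * ⟪f' a', z - xstar⟫ + u ^ 2 * ‖f' a'‖ ^ 2 / (2 * L) := by
    rw [sub_right_comm, norm_sub_sq_real, inner_smul_right, norm_smul, mul_pow,
      Real.norm_eq_abs, sq_abs, real_inner_comm]
    field_simp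
  rw [norm_sub_sq_real, real_inner_comm (f' a')] at h₁
  have hnn : 0 ≤ t ^ 2 * ‖f' a‖ ^ 2 / (2 * L) := by positivity
  linear_combination t ^ 2 * h₁ + u * h₂ - hi + hnn + hn +
    (f a' - f xstar + ‖f' a'‖ ^ 2 / (2 * L)) * htu

lemma fgm_potential_le (hL : 0 < L)
    (hcoco : ∀ a b, f b + ⟪f' b, a - b⟫ + ‖f' a - f' b‖ ^ 2 / (2 * L) ≤ f a)
    {xstar : F} (hstar : f' xstar = 0) {x y : ℕ → F}
    (hyrec : ∀ i : ℕ, y (i + 1) = x i - (1 / L) • f' (x i))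
    (hxrec : ∀ i : ℕ, x (i + 1) =
      y (i + 1) + ((tseq i - 1) / tseq (i + 1)) • (y (i + 1) - y i)) (n : ℕ) :
    tseq n ^ 2 * (f (x n) - f xstar) + L / 2 * ‖fgmZ y n - xstar‖ ^ 2 ≤
      L / 2 * ‖x 0 - xstar‖ ^ 2 := by
  induction n with
  | zero =>
    simpa [fgmZ_zero, hyrec, tseq] using fgm_potential_step hL hcoco hstar (t := 0) (u := 1)
      (a := x 0) (a' := x 0) (z := x 0) zero_le_one (by norm_num) (by simp)
  | succ k ih =>
    rw [fgmZ_succ hyrec hxrec]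
    refine (fgm_potential_step hL hcoco hstar (tseq_pos _).le (tseq_succ_sq k) ?_).trans ih
    rw [sq_tseq_succ_smul hxrec, hyrec]

end Potential

theorem stmt_15_general (d : ℕ) (L : ℝ) (hL : 0 < L)
    (f : EuclideanSpace ℝ (Fin d) → ℝ)
    (f' : EuclideanSpace ℝ (Fin d) → EuclideanSpace ℝ (Fin d))
    (hconv : ConvexOn ℝ Set.univ f)
    (hgrad : ∀ x, HasGradientAt f (f' x) x)
    (hlip : ∀ x y, ‖f' x - f' y‖ ≤ L * ‖x - y‖)
    (xstar : EuclideanSpace ℝ (Fin d)) (hmin : ∀ z, f xstar ≤ f z)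
    (x y : ℕ → EuclideanSpace ℝ (Fin d))
    (hyrec : ∀ i : ℕ, y (i + 1) = x i - (1 / L) • f' (x i))
    (hxrec : ∀ i : ℕ, x (i + 1) =
      y (i + 1) + ((tseq i - 1) / tseq (i + 1)) • (y (i + 1) - y i)) :
    ∀ n : ℕ, 1 ≤ n →
      f (x n) - f xstar ≤ L * ‖x 0 - xstar‖ ^ 2 / (2 * (tseq n) ^ 2) ∧
      L * ‖x 0 - xstar‖ ^ 2 / (2 * (tseq n) ^ 2) ≤
        2 * L * ‖x 0 - xstar‖ ^ 2 / ((n : ℝ) + 2) ^ 2 := by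
  intro n _
  have hstar : f' xstar = 0 :=
    IsLocalMin.hasGradientAt_eq_zero (Filter.Eventually.of_forall hmin) (hgrad xstar)
  have hpot := fgm_potential_le hL (hconv.add_inner_add_norm_sub_sq_div_le hgrad hlip hL) hstar
    hyrec hxrec n
  refine ⟨?_, (div_two_mul_tseq_sq_le (by positivity) n).trans_eq (by ring)⟩
  rw [le_div_iff₀ (by positivity [tseq_pos n])]
  nlinarith [sq_nonneg ‖fgmZ y n - xstar‖]

/-- Convergence bound for the primary sequence `{x_i}` of Nesterov's fast gradient
method FGM1. -/
theorem stmt_15 (d : ℕ) (L : ℝ) (hL : 0 < L)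
    (f : EuclideanSpace ℝ (Fin d) → ℝ)
    (f' : EuclideanSpace ℝ (Fin d) → EuclideanSpace ℝ (Fin d))
    (hconv : ConvexOn ℝ Set.univ f)
    (hgrad : ∀ x, HasGradientAt f (f' x) x)
    (hlip : ∀ x y, ‖f' x - f' y‖ ≤ L * ‖x - y‖)
    (xstar : EuclideanSpace ℝ (Fin d)) (hmin : ∀ z, f xstar ≤ f z)
    (x y : ℕ → EuclideanSpace ℝ (Fin d))
    (hy0 : y 0 = x 0)
    (hyrec : ∀ i : ℕ, y (i + 1) = x i - (1 / L) • f' (x i))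
    (hxrec : ∀ i : ℕ, x (i + 1) =
      y (i + 1) + ((tseq i - 1) / tseq (i + 1)) • (y (i + 1) - y i)) :
    ∀ n : ℕ, 1 ≤ n →
      f (x n) - f xstar ≤ L * ‖x 0 - xstar‖ ^ 2 / (2 * (tseq n) ^ 2) ∧
      L * ‖x 0 - xstar‖ ^ 2 / (2 * (tseq n) ^ 2) ≤
        2 * L * ‖x 0 - xstar‖ ^ 2 / ((n : ℝ) + 2) ^ 2 :=
  stmt_15_general d L hL f f' hconv hgrad hlip xstar hmin x y hyrec hxrec
end

section
/- Fix L, R > 0, N ≥ 1, and let θ_0,...,θ_N be the OGM sequence. Let φ be the function φ(x) = (LR/θ_N^2)||x|| - LR^2/(2θ_N^4) for ||x|| ≥ R/θ_N^2 and φ(x) = (L/2)||x||^2 otherwise, minimized at x_* = 0. Starting from x_0 = Rν for a unit vector ν, the OGM1 iterates satisfy x_i = (1 - (θ_i^2 - 1)/θ_N^2) R ν for i = 0,...,N-1 and x_N = (1 - (θ_N^2 - 1)/(2θ_N^2)) R ν, and consequently φ(x_N) - φ(x_*) = L R^2/(2 θ_N^2). -/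
noncomputable def θseq (N i : ℕ) : ℝ :=
  if i < N then tseq i else (1 + Real.sqrt (1 + 8 * (tseq (N - 1)) ^ 2)) / 2

/-!
On the region `‖z‖ ≥ R / θ_N²` the function `φ` is `(L R / θ_N²) ‖z‖` up to a constant, so along
the ray through `ν` its gradient is the constant vector `(L R / θ_N²) ν`. As long as the iterates
stay on that part of the ray, every OGM1 step is therefore a fixed linear combination of multiples
of `R ν`, and the coefficients are computed from the defining relations
`θ_{i+1}² - θ_{i+1} = θ_i²` (`i + 1 < N`) and `θ_N² - θ_N = 2 θ_{N-1}²`. They stay above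
`1 / θ_N²` because `θ_i < θ_N`, which keeps the iterates in the affine region, and evaluating the
affine formula at `x_N` gives `L R² / (2 θ_N²)`.
-/

section OGMSequence

lemma one_le_tseq (i : ℕ) : 1 ≤ tseq i := by
  cases i with
  | zero => simp [tseq]
  | succ i =>
    have : 1 ≤ Real.sqrt (1 + 4 * tseq i ^ 2) := Real.one_le_sqrt.2 (by nlinarith)
    simp only [tseq]
    linarith

lemma tseq_succ_sq_sub_self (i : ℕ) : tseq (i + 1) ^ 2 - tseq (i + 1) = tseq i ^ 2 := by
  have : Real.sqrt (1 + 4 * tseq i ^ 2) ^ 2 = 1 + 4 * tseq i ^ 2 := Real.sq_sqrt (by positivity)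
  simp only [tseq]
  linear_combination this / 4

lemma tseq_monotone : Monotone tseq := by
  refine monotone_nat_of_le_succ fun i => ?_
  nlinarith [one_le_tseq i, one_le_tseq (i + 1), tseq_succ_sq_sub_self i]

lemma θseq_of_lt {N i : ℕ} (hi : i < N) : θseq N i = tseq i := if_pos hi

lemma θseq_self_sq_sub_self (N : ℕ) : θseq N N ^ 2 - θseq N N = 2 * tseq (N - 1) ^ 2 := by
  have : Real.sqrt (1 + 8 * tseq (N - 1) ^ 2) ^ 2 = 1 + 8 * tseq (N - 1) ^ 2 :=
    Real.sq_sqrt (by positivity)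
  simp only [θseq, lt_irrefl, if_false]
  linear_combination this / 4

lemma two_le_θseq_self (N : ℕ) : 2 ≤ θseq N N := by
  have : 3 ≤ Real.sqrt (1 + 8 * tseq (N - 1) ^ 2) :=
    Real.le_sqrt_of_sq_le (by nlinarith [one_le_tseq (N - 1)])
  simp only [θseq, lt_irrefl, if_false]
  linarith

lemma one_le_θseq (N i : ℕ) : 1 ≤ θseq N i := by
  rcases lt_or_ge i N with hi | hi
  · exact θseq_of_lt hi ▸ one_le_tseq i
  · have : θseq N i = θseq N N := by simp [θseq, hi.not_gt]
    linarith [two_le_θseq_self N]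

lemma tseq_lt_θseq_self {N i : ℕ} (hi : i < N) : tseq i < θseq N N := by
  have hmono : tseq i ≤ tseq (N - 1) := tseq_monotone (by omega)
  nlinarith [θseq_self_sq_sub_self N, two_le_θseq_self N, one_le_tseq (N - 1)]

end OGMSequence

section AffineNormGradient

variable {E : Type*} [NormedAddCommGroup E] [InnerProductSpace ℝ E] [CompleteSpace E]

lemma hasGradientAt_norm {z : E} (hz : z ≠ 0) : HasGradientAt (‖·‖) (‖z‖⁻¹ • z) z := by
  have hsq := (hasStrictFDerivAt_norm_sq z).hasFDerivAt.sqrt (by positivity)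
  simp only [Real.sqrt_sq (norm_nonneg _)] at hsq
  rw [hasGradientAt_iff_hasFDerivAt]
  refine hsq.congr_fderiv (ContinuousLinearMap.ext fun w => ?_)
  have : ‖z‖ ≠ 0 := norm_ne_zero_iff.2 hz
  simp only [smul_apply, coe_innerSL_apply, nsmul_eq_mul, Nat.cast_ofNat,
    smul_eq_mul, map_smul, InnerProductSpace.toDual_apply_apply]
  field_simp

lemma HasGradientAt.eq_smul_of_affine_norm {φ : E → ℝ} {g z : E} {a b r : ℝ} (hr : 0 ≤ r)
    (hφ : ∀ w, r < ‖w‖ → φ w = a * ‖w‖ - b) (hz : r < ‖z‖) (hg : HasGradientAt φ g z) :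
    g = (a / ‖z‖) • z := by
  have hz0 : z ≠ 0 := norm_pos_iff.1 (hr.trans_lt hz)
  have hφz : φ =ᶠ[nhds z] fun w => a * ‖w‖ - b :=
    Filter.eventually_of_mem (isOpen_lt continuous_const continuous_norm |>.mem_nhds hz) hφ
  have haff : HasGradientAt (fun w : E => a * ‖w‖ - b) ((a / ‖z‖) • z) z := by
    rw [hasGradientAt_iff_hasFDerivAt, div_eq_mul_inv, mul_smul, map_smul]
    exact (((hasGradientAt_norm hz0).hasFDerivAt).const_mul a).sub_const b
  exact hg.unique (haff.congr_of_eventuallyEq hφz)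

lemma HasGradientAt.eq_smul_of_affine_norm_of_mem_ray {φ : E → ℝ} {g v : E} {a b c r : ℝ}
    (hr : 0 ≤ r) (hφ : ∀ w, r < ‖w‖ → φ w = a * ‖w‖ - b) (hc : 0 < c) (hcv : r < c * ‖v‖)
    (hg : HasGradientAt φ g (c • v)) :
    g = (a / ‖v‖) • v := by
  have hnorm : ‖c • v‖ = c * ‖v‖ := norm_smul_of_nonneg hc.le v
  have hv : ‖v‖ ≠ 0 := by rintro hv; rw [hv, mul_zero] at hcv; linarith
  rw [hg.eq_smul_of_affine_norm hr hφ (hnorm ▸ hcv), hnorm, smul_smul]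
  congr 1
  field_simp

end AffineNormGradient

section OGMIterates

variable {E : Type*} [AddCommGroup E] [Module ℝ E]

structure IsOGM1Run (N : ℕ) (L : ℝ) (g : E → E) (x y : ℕ → E) : Prop where
  y_zero : y 0 = x 0
  y_succ : ∀ i : ℕ, i + 1 ≤ N → y (i + 1) = x i - (1 / L) • g (x i)
  x_succ : ∀ i : ℕ, i + 1 ≤ N → x (i + 1) =
    y (i + 1) + ((θseq N i - 1) / θseq N (i + 1)) • (y (i + 1) - y i)
      + (θseq N i / θseq N (i + 1)) • (y (i + 1) - x i)

variable {N : ℕ} {L : ℝ} {v : E} {g : E → E} {x y : ℕ → E}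

lemma IsOGM1Run.step (hL : L ≠ 0)
    (hg : ∀ c : ℝ, 1 / θseq N N ^ 2 < c → g (c • v) = (L / θseq N N ^ 2) • v)
    (hrun : IsOGM1Run N L g x y)
    {i : ℕ} (hi : i < N) (hxi : x i = (1 - (tseq i ^ 2 - 1) / θseq N N ^ 2) • v)
    (hyi : y i = (1 - (tseq i ^ 2 - tseq i) / θseq N N ^ 2) • v)
    {k : ℝ} (hk : k ≠ 0) (hθ : θseq N (i + 1) ^ 2 - θseq N (i + 1) = k * tseq i ^ 2) :
    y (i + 1) = (1 - tseq i ^ 2 / θseq N N ^ 2) • v ∧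
      x (i + 1) = (1 - (θseq N (i + 1) ^ 2 - 1) / (k * θseq N N ^ 2)) • v := by
  have hT : θseq N N ≠ 0 := by linarith [two_le_θseq_self N]
  have hθ0 : θseq N (i + 1) ≠ 0 := by linarith [one_le_θseq N (i + 1)]
  have hregion : 1 / θseq N N ^ 2 < 1 - (tseq i ^ 2 - 1) / θseq N N ^ 2 := by
    have : tseq i ^ 2 < θseq N N ^ 2 := by
      nlinarith [tseq_lt_θseq_self hi, one_le_tseq i]
    rw [one_sub_div (pow_ne_zero 2 hT)]
    gcongr
    linarith
  have hy : y (i + 1) = (1 - tseq i ^ 2 / θseq N N ^ 2) • v := by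
    rw [hrun.y_succ i hi, hxi, hg _ hregion]
    match_scalars
    field_simp
    ring
  refine ⟨hy, ?_⟩
  rw [hrun.x_succ i hi, hy, hyi, hxi, θseq_of_lt hi]
  match_scalars
  field_simp
  linear_combination (θseq N (i + 1) + 1) * hθ

lemma IsOGM1Run.iterates_of_lt (hL : L ≠ 0)
    (hg : ∀ c : ℝ, 1 / θseq N N ^ 2 < c → g (c • v) = (L / θseq N N ^ 2) • v)
    (hx0 : x 0 = v) (hrun : IsOGM1Run N L g x y) :
    ∀ i < N, x i = (1 - (tseq i ^ 2 - 1) / θseq N N ^ 2) • v ∧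
      y i = (1 - (tseq i ^ 2 - tseq i) / θseq N N ^ 2) • v := by
  intro i
  induction i with
  | zero => intro _; simp [tseq, hx0, hrun.y_zero]
  | succ i ih =>
    intro hi
    have hrec := tseq_succ_sq_sub_self i
    obtain ⟨hxi, hyi⟩ := ih (by omega)
    obtain ⟨hy, hx⟩ := hrun.step hL hg (by omega) hxi hyi one_ne_zero
      (by rw [θseq_of_lt hi, hrec, one_mul])
    rw [θseq_of_lt hi, one_mul] at hx
    exact ⟨hx, hrec ▸ hy⟩

lemma IsOGM1Run.iterate_last (hN : 1 ≤ N) (hL : L ≠ 0)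
    (hg : ∀ c : ℝ, 1 / θseq N N ^ 2 < c → g (c • v) = (L / θseq N N ^ 2) • v)
    (hx0 : x 0 = v) (hrun : IsOGM1Run N L g x y) :
    x N = (1 - (θseq N N ^ 2 - 1) / (2 * θseq N N ^ 2)) • v := by
  obtain ⟨n, rfl⟩ : ∃ n, N = n + 1 := ⟨N - 1, by omega⟩
  obtain ⟨hxn, hyn⟩ := hrun.iterates_of_lt hL hg hx0 n n.lt_succ_self
  exact (hrun.step hL hg n.lt_succ_self hxn hyn two_ne_zero
    (θseq_self_sq_sub_self (n + 1))).2

end OGMIterates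

/-- On the worst-case function `φ`, the OGM1 iterates started at `x₀ = R ν` stay in
the affine region and exactly attain the bound `L R² / (2 θ_N²)`. -/
theorem stmt_18 (d N : ℕ) (hN : 1 ≤ N) (L R : ℝ) (hL : 0 < L) (hR : 0 < R)
    (ν : EuclideanSpace ℝ (Fin d)) (hν : ‖ν‖ = 1)
    (φ : EuclideanSpace ℝ (Fin d) → ℝ)
    (hφ : ∀ z, φ z =
      if R / (θseq N N) ^ 2 ≤ ‖z‖ then
        L * R / (θseq N N) ^ 2 * ‖z‖ - L * R ^ 2 / (2 * (θseq N N) ^ 4)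
      else L / 2 * ‖z‖ ^ 2)
    (g : EuclideanSpace ℝ (Fin d) → EuclideanSpace ℝ (Fin d))
    (hg : ∀ z, HasGradientAt φ (g z) z)
    (xstar : EuclideanSpace ℝ (Fin d)) (hstar : xstar = 0)
    (x y : ℕ → EuclideanSpace ℝ (Fin d))
    (hx0 : x 0 = R • ν) (hy0 : y 0 = x 0)
    (hyrec : ∀ i : ℕ, i + 1 ≤ N → y (i + 1) = x i - (1 / L) • g (x i))
    (hxrec : ∀ i : ℕ, i + 1 ≤ N → x (i + 1) =
      y (i + 1) + ((θseq N i - 1) / θseq N (i + 1)) • (y (i + 1) - y i)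
        + (θseq N i / θseq N (i + 1)) • (y (i + 1) - x i)) :
    (∀ i, i < N →
      x i = (1 - ((θseq N i) ^ 2 - 1) / (θseq N N) ^ 2) • (R • ν)) ∧
    x N = (1 - ((θseq N N) ^ 2 - 1) / (2 * (θseq N N) ^ 2)) • (R • ν) ∧
    φ (x N) - φ xstar = L * R ^ 2 / (2 * (θseq N N) ^ 2) := by
  set T := θseq N N with hTdef
  have hT : 2 ≤ T := two_le_θseq_self N
  have hRν : ‖R • ν‖ = R := by rw [norm_smul_of_nonneg hR.le, hν, mul_one]
  have haff : ∀ w, R / T ^ 2 < ‖w‖ → φ w = L * R / T ^ 2 * ‖w‖ - L * R ^ 2 / (2 * T ^ 4) :=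
    fun w hw => by rw [hφ, if_pos hw.le]
  have hgray : ∀ c : ℝ, 1 / T ^ 2 < c → g (c • R • ν) = (L / T ^ 2) • R • ν := by
    intro c hc
    have hc0 : 0 < c := lt_trans (by positivity) hc
    have hcR : R / T ^ 2 < c * ‖R • ν‖ := by
      rw [hRν, show R / T ^ 2 = 1 / T ^ 2 * R by ring]
      gcongr
    rw [(hg _).eq_smul_of_affine_norm_of_mem_ray (by positivity) haff hc0 hcR, hRν]
    field_simp
  have hrun : IsOGM1Run N L g x y := ⟨hy0, hyrec, hxrec⟩
  have hxN := hrun.iterate_last hN hL.ne' hgray hx0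
  refine ⟨fun i hi => θseq_of_lt hi ▸ (hrun.iterates_of_lt hL.ne' hgray hx0 i hi).1, hxN, ?_⟩
  have hcoef : 1 - (T ^ 2 - 1) / (2 * T ^ 2) = (T ^ 2 + 1) / (2 * T ^ 2) := by
    field_simp; ring
  have hnorm : ‖x N‖ = (T ^ 2 + 1) / (2 * T ^ 2) * R := by
    rw [hxN, ← hTdef, hcoef, norm_smul_of_nonneg (by positivity), hRν]
  have hregion : R / T ^ 2 < ‖x N‖ := by
    rw [hnorm, div_lt_iff₀ (by positivity)]
    field_simp
    nlinarith
  have hφ0 : φ 0 = 0 := by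
    rw [hφ, if_neg (by rw [norm_zero, not_le]; positivity)]
    simp
  rw [haff _ hregion, hstar, hφ0, hnorm]
  field_simp
  ring
end
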